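/- arXiv:1209.3253 — 2 statements merged into one kernel-verified Lean document; each statement's English description precedes it below -/
import Mathlib

section
/- Let M₁, M₂ ∈ ℕ with M₁, M₂ ≥ 2, set M := M₁·M₂, and let μ₁, μ₂ ∈ ℝ. For r = 1, 2 let a⁽ʳ⁾ ∈ ℂ^{M_r} be the ULA steering vector with entries a⁽ʳ⁾_m = exp(i·m·μ_r) for m = 0,…,M_r−1, let a := a⁽¹⁾ ⊗ a⁽²⁾ ∈ ℂ^M (Kronecker product), and let J₁⁽ʳ⁾, J₂⁽ʳ⁾ ∈ ℂ^{(M_r−1)×M_r} be the maximum-overlap selection matrices ((J₁⁽ʳ⁾)_{k,m} = 1 iff m = k, (J₂⁽ʳ⁾)_{k,m} = 1 iff m = k+1). Define the 2-D selection matrices J̃_ℓ⁽¹⁾ := J_ℓ⁽¹⁾ ⊗ I_{M₂} and J̃_ℓ⁽²⁾ := I_{M₁} ⊗ J_ℓ⁽²⁾ for ℓ = 1, 2, and for r = 1, 2 the row vector ã⁽ʳ⁾ᵀ := (√M·M_r/(M·(M_r−1))) · aᴴ·(J̃₁⁽ʳ⁾)ᴴ · (e^{−iμ_r}·J̃₂⁽ʳ⁾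 − J̃₁⁽ʳ⁾) · (I_M − (1/M)·a·aᴴ). Then ‖ã⁽ʳ⁾‖² = 2·M_r/(M_r−1)² for r = 1, 2. Consequently, for any nonzero s ∈ ℂ^N and σ ∈ ℝ, the first-order total mean square error of 2-D Standard ESPRIT for a single source, (σ²/2)·(1/(M·‖s‖²))·(‖ã⁽¹⁾‖² + ‖ã⁽²⁾‖²), equals (σ²/‖s‖²)·( 1/((M₁−1)²·M₂) + 1/(M₁·(M₂−1)²) ). -/
/-!
For a single source the error row vector factorises along the Kronecker structure. With
`a = a⁽¹⁾ ⊗ a⁽²⁾` and `J̃ℓ⁽¹⁾ = Jℓ ⊗ I`, the row `aᴴ J̃₁ᴴ (e^{-iμ₁} J̃₂ − J̃₁)` is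
`(a⁽¹⁾ᴴ J₁ᴴ (e^{-iμ₁} J₂ − J₁)) ⊗ a⁽²⁾ᴴ`, and the one-dimensional factor telescopes: since
`e^{-iμ} conj a_k = conj a_{k+1}`, it equals `(e_{M₁−1} − e₀) ⊙ conj a⁽¹⁾`. Its pairing with `a⁽¹⁾`
is `1 − 1 = 0`, so the projector `I − aaᴴ/M` fixes the row, and since every entry of `a` has
modulus one its squared norm is `2 M₂`. The squared normalisation `M₁ / (M₂ (M₁ − 1)²)` turns this
into `2 M₁ / (M₁ − 1)²`; the case `r = 2` is symmetric, and the MSE identity is then arithmetic.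
-/

open Matrix BigOperators Kronecker

section Kronecker

variable {R l m n p : Type*}

def kroneckerVec [Mul R] (x : m → R) (y : n → R) : m × n → R := fun i => x i.1 * y i.2

theorem kronecker_mulVec_kroneckerVec [CommSemiring R] [Fintype m] [Fintype p]
    (A : Matrix l m R) (B : Matrix n p R) (x : m → R) (y : p → R) :
    (A ⊗ₖ B) *ᵥ kroneckerVec x y = kroneckerVec (A *ᵥ x) (B *ᵥ y) := by
  ext i
  simp only [kroneckerVec, mulVec, dotProduct, kroneckerMap_apply, Fintype.sum_prod_type,
    Finset.sum_mul_sum]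
  exact Finset.sum_congr rfl fun _ _ => Finset.sum_congr rfl fun _ _ => mul_mul_mul_comm ..

theorem kroneckerVec_vecMul_kronecker [CommSemiring R] [Fintype l] [Fintype n]
    (x : l → R) (y : n → R) (A : Matrix l m R) (B : Matrix n p R) :
    kroneckerVec x y ᵥ* (A ⊗ₖ B) = kroneckerVec (x ᵥ* A) (y ᵥ* B) := by
  ext i
  simp only [kroneckerVec, vecMul, dotProduct, kroneckerMap_apply, Fintype.sum_prod_type,
    Finset.sum_mul_sum]
  exact Finset.sum_congr rfl fun _ _ => Finset.sum_congr rfl fun _ _ => mul_mul_mul_comm ..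

theorem kroneckerVec_dotProduct_kroneckerVec [CommSemiring R] [Fintype m] [Fintype n]
    (x u : m → R) (y v : n → R) :
    kroneckerVec x y ⬝ᵥ kroneckerVec u v = (x ⬝ᵥ u) * (y ⬝ᵥ v) := by
  simp only [kroneckerVec, dotProduct, Fintype.sum_prod_type, Finset.sum_mul_sum]
  exact Finset.sum_congr rfl fun _ _ => Finset.sum_congr rfl fun _ _ => mul_mul_mul_comm ..

theorem star_kroneckerVec [CommSemiring R] [StarRing R] (x : m → R) (y : n → R) :
    star (kroneckerVec x y) = kroneckerVec (star x) (star y) :=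
  funext fun i => star_mul' (x i.1) (y i.2)

theorem sum_norm_sq_kroneckerVec [SeminormedCommRing R] [NormMulClass R] [Fintype m] [Fintype n]
    (x : m → R) (y : n → R) :
    ∑ i, ‖kroneckerVec x y i‖ ^ 2 = (∑ i, ‖x i‖ ^ 2) * ∑ j, ‖y j‖ ^ 2 := by
  simp only [kroneckerVec, norm_mul, mul_pow, Fintype.sum_prod_type, Finset.sum_mul_sum]

theorem sub_kronecker [NonUnitalNonAssocRing R] (A B : Matrix l m R) (C : Matrix n p R) :
    (A - B) ⊗ₖ C = A ⊗ₖ C - B ⊗ₖ C :=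
  ext fun _ _ => sub_mul ..

theorem kronecker_sub [NonUnitalNonAssocRing R] (A : Matrix l m R) (B C : Matrix n p R) :
    A ⊗ₖ (B - C) = A ⊗ₖ B - A ⊗ₖ C :=
  ext fun _ _ => mul_sub ..

theorem vecMul_one_sub_smul_vecMulVec_of_dotProduct_eq_zero [CommRing R] [Fintype n]
    [DecidableEq n] {v x : n → R} (h : v ⬝ᵥ x = 0) (c : R) (y : n → R) :
    v ᵥ* (1 - c • vecMulVec x y) = v := by
  rw [vecMul_sub, vecMul_one, vecMul_smul, vecMul_vecMulVec, h, zero_smul, smul_zero, sub_zero]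

theorem sum_norm_sq_ofReal_smul [Fintype n] (r : ℝ) (w : n → ℂ) :
    ∑ i, ‖((r : ℂ) • w) i‖ ^ 2 = r ^ 2 * ∑ i, ‖w i‖ ^ 2 := by
  simp only [Pi.smul_apply, smul_eq_mul, norm_mul, Complex.norm_real, Real.norm_eq_abs, mul_pow,
    sq_abs, Finset.mul_sum]

end Kronecker

section UniformLinearArray

open Complex

noncomputable def steeringVec (M : ℕ) (μ : ℝ) : Fin M → ℂ :=
  fun m => exp (I * ((m : ℕ) : ℂ) * (μ : ℂ))

def selFirst (M : ℕ) : Matrix (Fin (M - 1)) (Fin M) ℂ :=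
  of fun k m => if (m : ℕ) = k then 1 else 0

def selLast (M : ℕ) : Matrix (Fin (M - 1)) (Fin M) ℂ :=
  of fun k m => if (m : ℕ) = k + 1 then 1 else 0

def endpointDiff (M : ℕ) : Fin M → ℂ :=
  fun m => (if (m : ℕ) = M - 1 then 1 else 0) - if (m : ℕ) = 0 then 1 else 0

theorem norm_steeringVec_apply (M : ℕ) (μ : ℝ) (m : Fin M) : ‖steeringVec M μ m‖ = 1 := by
  rw [steeringVec, norm_exp]
  simp

theorem selFirst_mulVec_steeringVec (M : ℕ) (μ : ℝ) :
    selFirst M *ᵥ steeringVec M μ = steeringVec (M - 1) μ := by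
  ext k
  rw [mulVec, dotProduct, Finset.sum_eq_single ⟨k, by omega⟩]
  · simp [selFirst, steeringVec]
  · intro m _ hm
    rw [selFirst, of_apply, if_neg (Fin.val_ne_of_ne hm), zero_mul]
  · simp

theorem exp_neg_mul_star_exp_mul (μ : ℝ) (k : ℕ) :
    exp (-(I * μ)) * star (exp (I * k * μ)) = star (exp (I * ((k + 1 : ℕ) : ℂ) * μ)) := by
  simp only [star_def, ← exp_conj, ← exp_add, map_mul, conj_I, conj_natCast, conj_ofReal]
  push_cast
  ring_nf

theorem star_steeringVec_vecMul_smul_selLast_sub_selFirst (M : ℕ) (μ : ℝ) :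
    star (steeringVec (M - 1) μ) ᵥ* (exp (-(I * μ)) • selLast M - selFirst M) =
      endpointDiff M * star (steeringVec M μ) := by
  ext m
  set g : ℕ → ℂ := fun k => if (m : ℕ) = k then star (exp (I * k * μ)) else 0
  calc _ = ∑ k ∈ Finset.range (M - 1), (g (k + 1) - g k) := by
        rw [vecMul, dotProduct, ← Fin.sum_univ_eq_sum_range]
        refine Finset.sum_congr rfl fun k _ => ?_
        simp only [g, steeringVec, selLast, selFirst, Pi.star_apply, Matrix.sub_apply,
          Matrix.smul_apply, of_apply, smul_eq_mul]
        rw [← exp_neg_mul_star_exp_mul]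
        split_ifs <;> ring
    _ = g (M - 1) - g 0 := Finset.sum_range_sub g _
    _ = _ := by
        simp only [g, endpointDiff, Pi.mul_apply, sub_mul, ite_mul, one_mul, zero_mul]
        congr 1 <;> split_ifs with h <;> simp [steeringVec, h]

theorem sum_endpointDiff (M : ℕ) : ∑ m, endpointDiff M m = 0 := by
  refine (Fin.sum_univ_eq_sum_range
    (fun k => (if k = M - 1 then (1 : ℂ) else 0) - if k = 0 then 1 else 0) M).trans ?_
  simp only [Finset.sum_sub_distrib, Finset.sum_ite_eq', Finset.mem_range]
  split_ifs <;> first | omega | simp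

theorem sum_norm_sq_endpointDiff {M : ℕ} (hM : 2 ≤ M) : ∑ m, ‖endpointDiff M m‖ ^ 2 = 2 := by
  have hM' : M - 1 ≠ 0 := by omega
  rw [Finset.sum_eq_add_of_mem (⟨M - 1, by omega⟩ : Fin M) ⟨0, by omega⟩ (Finset.mem_univ _)
    (Finset.mem_univ _) (by simpa [Fin.ext_iff] using hM')]
  · norm_num [endpointDiff, hM', hM'.symm]
  · intro c _ hc
    simp [endpointDiff, Fin.val_ne_of_ne hc.1, Fin.val_ne_of_ne hc.2]

theorem endpointDiff_mul_star_steeringVec_dotProduct (M : ℕ) (μ : ℝ) :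
    (endpointDiff M * star (steeringVec M μ)) ⬝ᵥ steeringVec M μ = 0 := by
  simp only [dotProduct, Pi.mul_apply, Pi.star_apply, mul_assoc, star_def, conj_mul',
    norm_steeringVec_apply, ofReal_one, one_pow, mul_one]
  exact sum_endpointDiff M

theorem sum_norm_sq_endpointDiff_mul_star_steeringVec {M : ℕ} (hM : 2 ≤ M) (μ : ℝ) :
    ∑ m, ‖(endpointDiff M * star (steeringVec M μ)) m‖ ^ 2 = 2 := by
  simpa [norm_mul, norm_star, norm_steeringVec_apply] using sum_norm_sq_endpointDiff hM

theorem sum_norm_sq_star_steeringVec (M : ℕ) (μ : ℝ) :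
    ∑ m, ‖star (steeringVec M μ) m‖ ^ 2 = M := by
  simp [norm_steeringVec_apply]

end UniformLinearArray

section UniformRectangularArray

open Complex

variable {M₁ M₂ : ℕ}

theorem esprit_errorRow_fst (μ : ℝ) (y : Fin M₂ → ℂ) (z : Fin M₁ × Fin M₂ → ℂ) (c : ℂ) :
    star ((selFirst M₁ ⊗ₖ (1 : Matrix (Fin M₂) (Fin M₂) ℂ)) *ᵥ
        kroneckerVec (steeringVec M₁ μ) y) ᵥ*
      ((exp (-(I * μ)) • (selLast M₁ ⊗ₖ (1 : Matrix (Fin M₂) (Fin M₂) ℂ)) -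
          selFirst M₁ ⊗ₖ 1) *
        ((1 : Matrix (Fin M₁ × Fin M₂) (Fin M₁ × Fin M₂) ℂ) -
          c • vecMulVec (kroneckerVec (steeringVec M₁ μ) y) z)) =
      kroneckerVec (endpointDiff M₁ * star (steeringVec M₁ μ)) (star y) := by
  rw [← vecMul_vecMul, ← smul_kronecker, ← sub_kronecker, kronecker_mulVec_kroneckerVec,
    one_mulVec, selFirst_mulVec_steeringVec, star_kroneckerVec, kroneckerVec_vecMul_kronecker,
    vecMul_one, star_steeringVec_vecMul_smul_selLast_sub_selFirst,
    vecMul_one_sub_smul_vecMulVec_of_dotProduct_eq_zero]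
  rw [kroneckerVec_dotProduct_kroneckerVec, endpointDiff_mul_star_steeringVec_dotProduct, zero_mul]

theorem esprit_errorRow_snd (μ : ℝ) (x : Fin M₁ → ℂ) (z : Fin M₁ × Fin M₂ → ℂ) (c : ℂ) :
    star (((1 : Matrix (Fin M₁) (Fin M₁) ℂ) ⊗ₖ selFirst M₂) *ᵥ
        kroneckerVec x (steeringVec M₂ μ)) ᵥ*
      ((exp (-(I * μ)) • ((1 : Matrix (Fin M₁) (Fin M₁) ℂ) ⊗ₖ selLast M₂) -
          1 ⊗ₖ selFirst M₂) *
        ((1 : Matrix (Fin M₁ × Fin M₂) (Fin M₁ × Fin M₂) ℂ) -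
          c • vecMulVec (kroneckerVec x (steeringVec M₂ μ)) z)) =
      kroneckerVec (star x) (endpointDiff M₂ * star (steeringVec M₂ μ)) := by
  rw [← vecMul_vecMul, ← kronecker_smul, ← kronecker_sub, kronecker_mulVec_kroneckerVec,
    one_mulVec, selFirst_mulVec_steeringVec, star_kroneckerVec, kroneckerVec_vecMul_kronecker,
    vecMul_one, star_steeringVec_vecMul_smul_selLast_sub_selFirst,
    vecMul_one_sub_smul_vecMulVec_of_dotProduct_eq_zero]
  rw [kroneckerVec_dotProduct_kroneckerVec, endpointDiff_mul_star_steeringVec_dotProduct, mul_zero]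

end UniformRectangularArray

theorem twoD_esprit_single_source_mse_general
    (M₁ M₂ : ℕ) (h1 : 2 ≤ M₁) (h2 : 2 ≤ M₂) (μ₁ μ₂ : ℝ)
    (N : ℕ) (s : Fin N → ℂ) (σ : ℝ)
    (a1 : Fin M₁ → ℂ) (a2 : Fin M₂ → ℂ)
    (ha1 : ∀ m, a1 m = Complex.exp (Complex.I * ((m : ℕ) : ℂ) * (μ₁ : ℂ)))
    (ha2 : ∀ m, a2 m = Complex.exp (Complex.I * ((m : ℕ) : ℂ) * (μ₂ : ℂ)))
    (a : Fin M₁ × Fin M₂ → ℂ) (ha : ∀ m, a m = a1 m.1 * a2 m.2)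
    (J11 J21 : Matrix (Fin (M₁ - 1)) (Fin M₁) ℂ)
    (hJ11 : ∀ k m, J11 k m = if (m : ℕ) = (k : ℕ) then 1 else 0)
    (hJ21 : ∀ k m, J21 k m = if (m : ℕ) = (k : ℕ) + 1 then 1 else 0)
    (J12 J22 : Matrix (Fin (M₂ - 1)) (Fin M₂) ℂ)
    (hJ12 : ∀ k m, J12 k m = if (m : ℕ) = (k : ℕ) then 1 else 0)
    (hJ22 : ∀ k m, J22 k m = if (m : ℕ) = (k : ℕ) + 1 then 1 else 0)
    (atilde1 : Fin M₁ × Fin M₂ → ℂ)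
    (hat1 : atilde1 =
      ((Real.sqrt ((M₁ : ℝ) * M₂) * (M₁ : ℝ) /
          (((M₁ : ℝ) * M₂) * ((M₁ : ℝ) - 1)) : ℝ) : ℂ) •
        (star ((J11 ⊗ₖ (1 : Matrix (Fin M₂) (Fin M₂) ℂ)) *ᵥ a) ᵥ*
          ((Complex.exp (-(Complex.I * (μ₁ : ℂ))) •
              (J21 ⊗ₖ (1 : Matrix (Fin M₂) (Fin M₂) ℂ)) -
              J11 ⊗ₖ (1 : Matrix (Fin M₂) (Fin M₂) ℂ)) *
            ((1 : Matrix (Fin M₁ × Fin M₂) (Fin M₁ × Fin M₂) ℂ) -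
              (((M₁ : ℕ) * M₂ : ℕ) : ℂ)⁻¹ • vecMulVec a (star a)))))
    (atilde2 : Fin M₁ × Fin M₂ → ℂ)
    (hat2 : atilde2 =
      ((Real.sqrt ((M₁ : ℝ) * M₂) * (M₂ : ℝ) /
          (((M₁ : ℝ) * M₂) * ((M₂ : ℝ) - 1)) : ℝ) : ℂ) •
        (star (((1 : Matrix (Fin M₁) (Fin M₁) ℂ) ⊗ₖ J12) *ᵥ a) ᵥ*
          ((Complex.exp (-(Complex.I * (μ₂ : ℂ))) •
              ((1 : Matrix (Fin M₁) (Fin M₁) ℂ) ⊗ₖ J22) -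
              (1 : Matrix (Fin M₁) (Fin M₁) ℂ) ⊗ₖ J12) *
            ((1 : Matrix (Fin M₁ × Fin M₂) (Fin M₁ × Fin M₂) ℂ) -
              (((M₁ : ℕ) * M₂ : ℕ) : ℂ)⁻¹ • vecMulVec a (star a))))) :
    ∑ m, ‖atilde1 m‖ ^ 2 = 2 * (M₁ : ℝ) / ((M₁ : ℝ) - 1) ^ 2 ∧
    ∑ m, ‖atilde2 m‖ ^ 2 = 2 * (M₂ : ℝ) / ((M₂ : ℝ) - 1) ^ 2 ∧
    (σ ^ 2 / 2) * (1 / (((M₁ : ℝ) * M₂) * (∑ i, ‖s i‖ ^ 2))) *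
        (∑ m, ‖atilde1 m‖ ^ 2 + ∑ m, ‖atilde2 m‖ ^ 2) =
      (σ ^ 2 / (∑ i, ‖s i‖ ^ 2)) *
        (1 / (((M₁ : ℝ) - 1) ^ 2 * (M₂ : ℝ)) + 1 / ((M₁ : ℝ) * ((M₂ : ℝ) - 1) ^ 2)) := by
  obtain rfl : a1 = steeringVec M₁ μ₁ := funext ha1
  obtain rfl : a2 = steeringVec M₂ μ₂ := funext ha2
  obtain rfl : a = kroneckerVec (steeringVec M₁ μ₁) (steeringVec M₂ μ₂) := funext ha
  obtain rfl : J11 = selFirst M₁ := Matrix.ext hJ11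
  obtain rfl : J21 = selLast M₁ := Matrix.ext hJ21
  obtain rfl : J12 = selFirst M₂ := Matrix.ext hJ12
  obtain rfl : J22 = selLast M₂ := Matrix.ext hJ22
  have hM₁ : (2 : ℝ) ≤ M₁ := by exact_mod_cast h1
  have hM₂ : (2 : ℝ) ≤ M₂ := by exact_mod_cast h2
  have hM : Real.sqrt ((M₁ : ℝ) * M₂) ^ 2 = M₁ * M₂ := Real.sq_sqrt (by positivity)
  have hsum1 : ∑ m, ‖atilde1 m‖ ^ 2 = 2 * (M₁ : ℝ) / ((M₁ : ℝ) - 1) ^ 2 := by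
    rw [hat1, esprit_errorRow_fst, sum_norm_sq_ofReal_smul, sum_norm_sq_kroneckerVec,
      sum_norm_sq_endpointDiff_mul_star_steeringVec h1, sum_norm_sq_star_steeringVec, div_pow,
      mul_pow, hM]
    field_simp
  have hsum2 : ∑ m, ‖atilde2 m‖ ^ 2 = 2 * (M₂ : ℝ) / ((M₂ : ℝ) - 1) ^ 2 := by
    rw [hat2, esprit_errorRow_snd, sum_norm_sq_ofReal_smul, sum_norm_sq_kroneckerVec,
      sum_norm_sq_endpointDiff_mul_star_steeringVec h2, sum_norm_sq_star_steeringVec, div_pow,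
      mul_pow, hM]
    field_simp
  refine ⟨hsum1, hsum2, ?_⟩
  rw [hsum1, hsum2]
  field_simp

/-- Mean square error part of Theorem 7 (Appendix H) of the paper: for a single source
on an `M₁ × M₂` URA, the 2-D ESPRIT error vectors satisfy `‖ã⁽ʳ⁾‖² = 2M_r/(M_r−1)²`,
and the first-order total MSE of 2-D Standard ESPRIT,
`(σ²/2)(1/(M‖s‖²))(‖ã⁽¹⁾‖² + ‖ã⁽²⁾‖²)`, equals
`(σ²/‖s‖²)(1/((M₁−1)²M₂) + 1/(M₁(M₂−1)²))`. -/
theorem twoD_esprit_single_source_mse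
    (M₁ M₂ : ℕ) (h1 : 2 ≤ M₁) (h2 : 2 ≤ M₂) (μ₁ μ₂ : ℝ)
    (N : ℕ) (hN : 1 ≤ N) (s : Fin N → ℂ) (hs : s ≠ 0) (σ : ℝ)
    (a1 : Fin M₁ → ℂ) (a2 : Fin M₂ → ℂ)
    (ha1 : ∀ m, a1 m = Complex.exp (Complex.I * ((m : ℕ) : ℂ) * (μ₁ : ℂ)))
    (ha2 : ∀ m, a2 m = Complex.exp (Complex.I * ((m : ℕ) : ℂ) * (μ₂ : ℂ)))
    (a : Fin M₁ × Fin M₂ → ℂ) (ha : ∀ m, a m = a1 m.1 * a2 m.2)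
    (J11 J21 : Matrix (Fin (M₁ - 1)) (Fin M₁) ℂ)
    (hJ11 : ∀ k m, J11 k m = if (m : ℕ) = (k : ℕ) then 1 else 0)
    (hJ21 : ∀ k m, J21 k m = if (m : ℕ) = (k : ℕ) + 1 then 1 else 0)
    (J12 J22 : Matrix (Fin (M₂ - 1)) (Fin M₂) ℂ)
    (hJ12 : ∀ k m, J12 k m = if (m : ℕ) = (k : ℕ) then 1 else 0)
    (hJ22 : ∀ k m, J22 k m = if (m : ℕ) = (k : ℕ) + 1 then 1 else 0)
    (atilde1 : Fin M₁ × Fin M₂ → ℂ)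
    (hat1 : atilde1 =
      ((Real.sqrt ((M₁ : ℝ) * M₂) * (M₁ : ℝ) /
          (((M₁ : ℝ) * M₂) * ((M₁ : ℝ) - 1)) : ℝ) : ℂ) •
        (star ((J11 ⊗ₖ (1 : Matrix (Fin M₂) (Fin M₂) ℂ)) *ᵥ a) ᵥ*
          ((Complex.exp (-(Complex.I * (μ₁ : ℂ))) •
              (J21 ⊗ₖ (1 : Matrix (Fin M₂) (Fin M₂) ℂ)) -
              J11 ⊗ₖ (1 : Matrix (Fin M₂) (Fin M₂) ℂ)) *
            ((1 : Matrix (Fin M₁ × Fin M₂) (Fin M₁ × Fin M₂) ℂ) -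
              (((M₁ : ℕ) * M₂ : ℕ) : ℂ)⁻¹ • vecMulVec a (star a)))))
    (atilde2 : Fin M₁ × Fin M₂ → ℂ)
    (hat2 : atilde2 =
      ((Real.sqrt ((M₁ : ℝ) * M₂) * (M₂ : ℝ) /
          (((M₁ : ℝ) * M₂) * ((M₂ : ℝ) - 1)) : ℝ) : ℂ) •
        (star (((1 : Matrix (Fin M₁) (Fin M₁) ℂ) ⊗ₖ J12) *ᵥ a) ᵥ*
          ((Complex.exp (-(Complex.I * (μ₂ : ℂ))) •
              ((1 : Matrix (Fin M₁) (Fin M₁) ℂ) ⊗ₖ J22) -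
              (1 : Matrix (Fin M₁) (Fin M₁) ℂ) ⊗ₖ J12) *
            ((1 : Matrix (Fin M₁ × Fin M₂) (Fin M₁ × Fin M₂) ℂ) -
              (((M₁ : ℕ) * M₂ : ℕ) : ℂ)⁻¹ • vecMulVec a (star a))))) :
    ∑ m, ‖atilde1 m‖ ^ 2 = 2 * (M₁ : ℝ) / ((M₁ : ℝ) - 1) ^ 2 ∧
    ∑ m, ‖atilde2 m‖ ^ 2 = 2 * (M₂ : ℝ) / ((M₂ : ℝ) - 1) ^ 2 ∧
    (σ ^ 2 / 2) * (1 / (((M₁ : ℝ) * M₂) * (∑ i, ‖s i‖ ^ 2))) *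
        (∑ m, ‖atilde1 m‖ ^ 2 + ∑ m, ‖atilde2 m‖ ^ 2) =
      (σ ^ 2 / (∑ i, ‖s i‖ ^ 2)) *
        (1 / (((M₁ : ℝ) - 1) ^ 2 * (M₂ : ℝ)) + 1 / ((M₁ : ℝ) * ((M₂ : ℝ) - 1) ^ 2)) :=
  twoD_esprit_single_source_mse_general M₁ M₂ h1 h2 μ₁ μ₂ N s σ a1 a2 ha1 ha2 a ha J11 J21 hJ11 hJ21
    J12 J22 hJ12 hJ22 atilde1 hat1 atilde2 hat2
end

section
/- Let M₁, M₂ ∈ ℕ with M₁, M₂ ≥ 2, set M := M₁·M₂, and let μ₁, μ₂ ∈ ℝ. For r = 1, 2 let a⁽ʳ⁾ ∈ ℂ^{M_r} have entries a⁽ʳ⁾_m = exp(i·m·μ_r) and let d⁽ʳ⁾ ∈ ℂ^{M_r} have entries d⁽ʳ⁾_m = i·m·exp(i·m·μ_r) (m = 0,…,M_r−1). Set a := a⁽¹⁾ ⊗ a⁽²⁾, d̃⁽¹⁾ := d⁽¹⁾ ⊗ a⁽²⁾ and d̃⁽²⁾ := a⁽¹⁾ ⊗ d⁽²⁾ (Kronecker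 products). Then: (i) for r = 1, 2, (d̃⁽ʳ⁾)ᴴ·d̃⁽ʳ⁾ − (1/M)·|(d̃⁽ʳ⁾)ᴴ·a|² = M·(M_r²−1)/12; (ii) (d̃⁽¹⁾)ᴴ·d̃⁽²⁾ − (1/M)·((d̃⁽¹⁾)ᴴ·a)·(aᴴ·d̃⁽²⁾) = 0. Consequently, for every real ρ̂ > 0, the trace of the 2-D deterministic single-source Cramér–Rao bound, (1/(2ρ̂))·( (M(M₁²−1)/12)^{-1} + (M(M₂²−1)/12)^{-1} ), equals (1/ρ̂)·( 6/(M·(M₁²−1)) + 6/(M·(M₂²−1)) ). -/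
/-!
The Gram sums of Kronecker products factor mode by mode, e.g.
`⟨d̃⁽¹⁾, a⟩ = ⟨d⁽¹⁾, a⁽¹⁾⟩ ⟨a⁽²⁾, a⁽²⁾⟩`, so every entry of `J` is assembled from the
one-dimensional sums of a uniform linear array. There `conj (a_m) a_m = 1`, and these sums are
`n`, `∓ i n(n-1)/2` and `n(n-1)(2n-1)/6`. The diagonal entries become `M_{r'}` times
`n(n-1)(2n-1)/6 - n(n-1)²/4 = n(n²-1)/12`, while the off-diagonal one vanishes because
`⟨d̃⁽¹⁾, d̃⁽²⁾⟩ = ⟨d⁽¹⁾, a⁽¹⁾⟩ ⟨a⁽²⁾, d⁽²⁾⟩` factors exactly like its correction term.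
-/

open Complex ComplexConjugate Finset

lemma sum_range_natCast_mul_two {R : Type*} [CommRing R] (n : ℕ) :
    (∑ i ∈ range n, (i : R)) * 2 = n * (n - 1) := by
  induction n with
  | zero => simp
  | succ k ih =>
    rw [sum_range_succ]
    push_cast
    linear_combination ih

lemma sum_range_natCast_sq_mul_six {R : Type*} [CommRing R] (n : ℕ) :
    (∑ i ∈ range n, (i : R) ^ 2) * 6 = n * (n - 1) * (2 * n - 1) := by
  induction n with
  | zero => simp
  | succ k ih =>
    rw [sum_range_succ]
    push_cast
    linear_combination ih

lemma sum_conj_mul_of_kronecker {R α β : Type*} [CommSemiring R] [StarRing R]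
    [Fintype α] [Fintype β] {u v : α × β → R} {u₁ v₁ : α → R} {u₂ v₂ : β → R}
    (hu : ∀ m, u m = u₁ m.1 * u₂ m.2) (hv : ∀ m, v m = v₁ m.1 * v₂ m.2) :
    ∑ m, starRingEnd R (u m) * v m =
      (∑ x, starRingEnd R (u₁ x) * v₁ x) * ∑ y, starRingEnd R (u₂ y) * v₂ y := by
  simp only [hu, hv, map_mul, Fintype.sum_prod_type, sum_mul_sum]
  exact sum_congr rfl fun x _ => sum_congr rfl fun y _ => by ring

/-- The steering vector `a⁽ʳ⁾` of the paper, for a mode with `n` sensors and spatial frequency `μ`;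
`ulaSteeringDeriv` is its derivative `d⁽ʳ⁾` in `μ`. -/
noncomputable def ulaSteering (n : ℕ) (μ : ℝ) : Fin n → ℂ :=
  fun m => exp (I * ((m : ℕ) : ℂ) * μ)

noncomputable def ulaSteeringDeriv (n : ℕ) (μ : ℝ) : Fin n → ℂ :=
  fun m => I * ((m : ℕ) : ℂ) * exp (I * ((m : ℕ) : ℂ) * μ)

section ulaSteering

variable (n : ℕ) (μ : ℝ)

lemma ulaSteeringDeriv_apply (m : Fin n) :
    ulaSteeringDeriv n μ m = I * ((m : ℕ) : ℂ) * ulaSteering n μ m := rfl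

lemma conj_ulaSteering_mul_self (m : Fin n) :
    conj (ulaSteering n μ m) * ulaSteering n μ m = 1 := by
  rw [ulaSteering, ← exp_conj, ← exp_add]
  simp [conj_I]

lemma conj_ulaSteeringDeriv_mul_self (m : Fin n) :
    conj (ulaSteeringDeriv n μ m) * ulaSteeringDeriv n μ m = ((m : ℕ) : ℂ) ^ 2 := by
  have hunit := conj_ulaSteering_mul_self n μ m
  rw [ulaSteeringDeriv_apply, map_mul, map_mul, conj_I, conj_natCast]
  linear_combination ((m : ℕ) : ℂ) ^ 2 * hunit -
    ((m : ℕ) : ℂ) ^ 2 * conj (ulaSteering n μ m) * ulaSteering n μ m * I_sq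

lemma conj_ulaSteeringDeriv_mul_ulaSteering (m : Fin n) :
    conj (ulaSteeringDeriv n μ m) * ulaSteering n μ m = -(I * ((m : ℕ) : ℂ)) := by
  rw [ulaSteeringDeriv_apply, map_mul, map_mul, conj_I, conj_natCast]
  linear_combination -(I * ((m : ℕ) : ℂ)) * conj_ulaSteering_mul_self n μ m

lemma conj_ulaSteering_mul_ulaSteeringDeriv (m : Fin n) :
    conj (ulaSteering n μ m) * ulaSteeringDeriv n μ m = I * ((m : ℕ) : ℂ) := by
  rw [ulaSteeringDeriv_apply]
  linear_combination I * ((m : ℕ) : ℂ) * conj_ulaSteering_mul_self n μ m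

lemma sum_fin_natCast_mul_two {R : Type*} [CommRing R] :
    (∑ m : Fin n, ((m : ℕ) : R)) * 2 = n * (n - 1) := by
  rw [Fin.sum_univ_eq_sum_range (fun i => (i : R)), sum_range_natCast_mul_two]

lemma sum_conj_ulaSteering_mul_self :
    ∑ m, conj (ulaSteering n μ m) * ulaSteering n μ m = n := by
  simp [conj_ulaSteering_mul_self]

lemma sum_conj_ulaSteeringDeriv_mul_self :
    ∑ m, conj (ulaSteeringDeriv n μ m) * ulaSteeringDeriv n μ m =
      n * (n - 1) * (2 * n - 1) / 6 := by
  rw [eq_div_iff (by norm_num), ← sum_range_natCast_sq_mul_six,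
    ← Fin.sum_univ_eq_sum_range (fun i => (i : ℂ) ^ 2)]
  simp only [conj_ulaSteeringDeriv_mul_self]

lemma sum_conj_ulaSteeringDeriv_mul_ulaSteering :
    ∑ m, conj (ulaSteeringDeriv n μ m) * ulaSteering n μ m = -(I * (n * (n - 1) / 2)) := by
  simp only [conj_ulaSteeringDeriv_mul_ulaSteering, sum_neg_distrib, ← mul_sum]
  rw [← sum_fin_natCast_mul_two]
  ring

lemma sum_conj_ulaSteering_mul_ulaSteeringDeriv :
    ∑ m, conj (ulaSteering n μ m) * ulaSteeringDeriv n μ m = I * (n * (n - 1) / 2) := by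
  simp only [conj_ulaSteering_mul_ulaSteeringDeriv, ← mul_sum]
  rw [← sum_fin_natCast_mul_two]
  ring

end ulaSteering

theorem twoD_single_source_crb_general
    (M₁ M₂ : ℕ) (μ₁ μ₂ : ℝ)
    (a1 : Fin M₁ → ℂ) (a2 : Fin M₂ → ℂ)
    (ha1 : ∀ m, a1 m = Complex.exp (Complex.I * ((m : ℕ) : ℂ) * (μ₁ : ℂ)))
    (ha2 : ∀ m, a2 m = Complex.exp (Complex.I * ((m : ℕ) : ℂ) * (μ₂ : ℂ)))
    (d1 : Fin M₁ → ℂ) (d2 : Fin M₂ → ℂ)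
    (hd1 : ∀ m, d1 m = Complex.I * ((m : ℕ) : ℂ) *
      Complex.exp (Complex.I * ((m : ℕ) : ℂ) * (μ₁ : ℂ)))
    (hd2 : ∀ m, d2 m = Complex.I * ((m : ℕ) : ℂ) *
      Complex.exp (Complex.I * ((m : ℕ) : ℂ) * (μ₂ : ℂ)))
    (a dt1 dt2 : Fin M₁ × Fin M₂ → ℂ)
    (ha : ∀ m, a m = a1 m.1 * a2 m.2)
    (hdt1 : ∀ m, dt1 m = d1 m.1 * a2 m.2)
    (hdt2 : ∀ m, dt2 m = a1 m.1 * d2 m.2) :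
    ((∑ m, (starRingEnd ℂ) (dt1 m) * dt1 m) -
        (((M₁ : ℕ) * M₂ : ℕ) : ℂ)⁻¹ *
          (((‖∑ m, (starRingEnd ℂ) (dt1 m) * a m‖ ^ 2 : ℝ)) : ℂ) =
      (((M₁ : ℕ) * M₂ : ℕ) : ℂ) * ((M₁ : ℂ) ^ 2 - 1) / 12) ∧
    ((∑ m, (starRingEnd ℂ) (dt2 m) * dt2 m) -
        (((M₁ : ℕ) * M₂ : ℕ) : ℂ)⁻¹ *
          (((‖∑ m, (starRingEnd ℂ) (dt2 m) * a m‖ ^ 2 : ℝ)) : ℂ) =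
      (((M₁ : ℕ) * M₂ : ℕ) : ℂ) * ((M₂ : ℂ) ^ 2 - 1) / 12) ∧
    ((∑ m, (starRingEnd ℂ) (dt1 m) * dt2 m) -
        (((M₁ : ℕ) * M₂ : ℕ) : ℂ)⁻¹ *
          (∑ m, (starRingEnd ℂ) (dt1 m) * a m) *
          (∑ m, (starRingEnd ℂ) (a m) * dt2 m) = 0) ∧
    (∀ ρ : ℝ, 0 < ρ →
      (1 / (2 * ρ)) * ((((M₁ : ℝ) * M₂) * ((M₁ : ℝ) ^ 2 - 1) / 12)⁻¹ +
          (((M₁ : ℝ) * M₂) * ((M₂ : ℝ) ^ 2 - 1) / 12)⁻¹) =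
        (1 / ρ) * (6 / (((M₁ : ℝ) * M₂) * ((M₁ : ℝ) ^ 2 - 1)) +
          6 / (((M₁ : ℝ) * M₂) * ((M₂ : ℝ) ^ 2 - 1)))) := by
  obtain rfl : a1 = ulaSteering M₁ μ₁ := funext ha1
  obtain rfl : a2 = ulaSteering M₂ μ₂ := funext ha2
  obtain rfl : d1 = ulaSteeringDeriv M₁ μ₁ := funext hd1
  obtain rfl : d2 = ulaSteeringDeriv M₂ μ₂ := funext hd2
  simp only [ofReal_pow, ← conj_mul', sum_conj_mul_of_kronecker hdt1 hdt1,
    sum_conj_mul_of_kronecker hdt2 hdt2, sum_conj_mul_of_kronecker hdt1 hdt2,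
    sum_conj_mul_of_kronecker hdt1 ha, sum_conj_mul_of_kronecker hdt2 ha,
    sum_conj_mul_of_kronecker ha hdt2, sum_conj_ulaSteering_mul_self,
    sum_conj_ulaSteeringDeriv_mul_self, sum_conj_ulaSteeringDeriv_mul_ulaSteering,
    sum_conj_ulaSteering_mul_ulaSteeringDeriv]
  refine ⟨?_, ?_, ?_, fun ρ _ => by rw [inv_div, inv_div]; ring⟩
  all_goals
    simp only [Nat.cast_mul, map_neg, map_mul, map_div₀, map_sub, map_natCast, map_one,
      map_ofNat, conj_I]
    field_simp
    rw [I_sq]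
    ring

/-- Cramér–Rao bound part of Theorem 7 (Appendix H) of the paper: for a single source
on an `M₁ × M₂` URA the Fisher-type matrix is diagonal with diagonal entries
`M(M_r²−1)/12`, and consequently the trace of the 2-D deterministic single-source CRB
equals `(1/ρ̂)(6/(M(M₁²−1)) + 6/(M(M₂²−1)))`. -/
theorem twoD_single_source_crb
    (M₁ M₂ : ℕ) (h1 : 2 ≤ M₁) (h2 : 2 ≤ M₂) (μ₁ μ₂ : ℝ)
    (a1 : Fin M₁ → ℂ) (a2 : Fin M₂ → ℂ)
    (ha1 : ∀ m, a1 m = Complex.exp (Complex.I * ((m : ℕ) : ℂ) * (μ₁ : ℂ)))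
    (ha2 : ∀ m, a2 m = Complex.exp (Complex.I * ((m : ℕ) : ℂ) * (μ₂ : ℂ)))
    (d1 : Fin M₁ → ℂ) (d2 : Fin M₂ → ℂ)
    (hd1 : ∀ m, d1 m = Complex.I * ((m : ℕ) : ℂ) *
      Complex.exp (Complex.I * ((m : ℕ) : ℂ) * (μ₁ : ℂ)))
    (hd2 : ∀ m, d2 m = Complex.I * ((m : ℕ) : ℂ) *
      Complex.exp (Complex.I * ((m : ℕ) : ℂ) * (μ₂ : ℂ)))
    (a dt1 dt2 : Fin M₁ × Fin M₂ → ℂ)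
    (ha : ∀ m, a m = a1 m.1 * a2 m.2)
    (hdt1 : ∀ m, dt1 m = d1 m.1 * a2 m.2)
    (hdt2 : ∀ m, dt2 m = a1 m.1 * d2 m.2) :
    ((∑ m, (starRingEnd ℂ) (dt1 m) * dt1 m) -
        (((M₁ : ℕ) * M₂ : ℕ) : ℂ)⁻¹ *
          (((‖∑ m, (starRingEnd ℂ) (dt1 m) * a m‖ ^ 2 : ℝ)) : ℂ) =
      (((M₁ : ℕ) * M₂ : ℕ) : ℂ) * ((M₁ : ℂ) ^ 2 - 1) / 12) ∧
    ((∑ m, (starRingEnd ℂ) (dt2 m) * dt2 m) -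
        (((M₁ : ℕ) * M₂ : ℕ) : ℂ)⁻¹ *
          (((‖∑ m, (starRingEnd ℂ) (dt2 m) * a m‖ ^ 2 : ℝ)) : ℂ) =
      (((M₁ : ℕ) * M₂ : ℕ) : ℂ) * ((M₂ : ℂ) ^ 2 - 1) / 12) ∧
    ((∑ m, (starRingEnd ℂ) (dt1 m) * dt2 m) -
        (((M₁ : ℕ) * M₂ : ℕ) : ℂ)⁻¹ *
          (∑ m, (starRingEnd ℂ) (dt1 m) * a m) *
          (∑ m, (starRingEnd ℂ) (a m) * dt2 m) = 0) ∧
    (∀ ρ : ℝ, 0 < ρ →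
      (1 / (2 * ρ)) * ((((M₁ : ℝ) * M₂) * ((M₁ : ℝ) ^ 2 - 1) / 12)⁻¹ +
          (((M₁ : ℝ) * M₂) * ((M₂ : ℝ) ^ 2 - 1) / 12)⁻¹) =
        (1 / ρ) * (6 / (((M₁ : ℝ) * M₂) * ((M₁ : ℝ) ^ 2 - 1)) +
          6 / (((M₁ : ℝ) * M₂) * ((M₂ : ℝ) ^ 2 - 1)))) :=
  twoD_single_source_crb_general M₁ M₂ μ₁ μ₂ a1 a2 ha1 ha2 d1 d2 hd1 hd2 a dt1 dt2 ha hdt1 hdt2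
end
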